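/- Decoupling of the Lax pair (Proposition 2.2, rational-function version). Let V be a complex vector space, let Γ_k(z) = Σ_{α∈Σ_k} Σ_{p=0}^{m_α−1} v^α_p (z−z_α)^{−(p+1)} (v^α_p ∈ V, k = 1,2), set Γ_γ(z) = Γ_1(z) + Γ_2(z − γ^{−1}), and fix coefficients ε_1, …, ε_M ∈ ℂ. Define ℒ_γ(z) = Γ_γ(z)/φ_γ(z) and ℳ_γ(z) = Σ_{i=1}^M (ε_i/φ_γ'(ζ_i(γ))) · Γ_γ(ζ_i(γ))/(z − ζ_i(γ)), and likewise ℒ^{(1)}(z) = Γ_1(z)/φ_1(z), ℳ^{(1)}(z) = Σ_{i=1}^{M_1} (ε_i/φ_1'(ζ^{(1)}_i)) Γ_1(ζ^{(1)}_i)/(z − ζ^{(1)}_i), ℒ^{(2)}(z) = Γ_2(z)/φ_2(z), ℳ^{(2)}(z) = Σ_{i=M_1+1}^{M} (ε_i/φ_2'(ζ^{(2)}_i)) Γ_2(ζ^{(2)}_i)/(z − ζ^{(2)}_i). Then for every z ∈ ℂ avoiding the poles of the limit functions: (ℒ_γ(z), ℳ_γ(z)) → (ℒ^{(1)}(z), ℳ^{(1)}(z))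 as γ → 0, and (ℒ_γ(z + γ^{−1}), ℳ_γ(z + γ^{−1})) → (ℒ^{(2)}(z), ℳ^{(2)}(z)) as γ → 0. -/

import Mathlib

/-!
As `γ → 0` the two groups of poles separate: seen from a fixed `z`, the second system sits at
distance `γ⁻¹ → ∞`, where every partial-fraction sum (`χ₂`, `χ₂'`, `Γ₂`) vanishes, while the zeros
`ζ_i(γ)` follow `ζ⁽¹⁾_i`, resp. `γ⁻¹ + ζ⁽²⁾_i`. Hence only the first system survives in `ℒ_γ(z)`,
and in `ℳ_γ(z)` the terms of the second cluster die, because `(z - ζ_i(γ))⁻¹ → 0` while their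
coefficients stay bounded: `φ_γ'(ζ_i(γ))` tends to `φ₂'(ζ⁽²⁾_i) ≠ 0`. The one global input is
`φ₁(z) ≠ 0` away from the `ζ⁽¹⁾_i`: clearing denominators turns `φ₁` into a polynomial of degree
`M₁` with leading coefficient `-ℓ^∞`, which already has the `M₁` roots `ζ⁽¹⁾_i`. The second limit
is the mirror image, seen from `z + γ⁻¹`.
-/

open scoped BigOperators Topology
open Filter

/-- The partial-fraction part `χ(w)` of a twist function (site `a` has multiplicity `m a + 1`). -/
noncomputable def chiFun {n : ℕ} (z : Fin n → ℂ) (m : Fin n → ℕ)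
    (l : Fin n → ℕ → ℂ) (w : ℂ) : ℂ :=
  ∑ a, ∑ p ∈ Finset.range (m a + 1), l a p / (w - z a) ^ (p + 1)

/-- A `V`-valued Gaudin Lax matrix `Γ(w) = Σ_α Σ_p v^α_p (w - z_α)^{-(p+1)}`. -/
noncomputable def gamFun {n : ℕ} {V : Type*} [AddCommGroup V] [Module ℂ V]
    (z : Fin n → ℂ) (m : Fin n → ℕ) (v : Fin n → ℕ → V) (w : ℂ) : V :=
  ∑ a, ∑ p ∈ Finset.range (m a + 1), ((w - z a) ^ (p + 1))⁻¹ • v a p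

open Bornology

section PartialFractions

variable {n : ℕ} (z : Fin n → ℂ) (m : Fin n → ℕ)

lemma chiFun_eq_gamFun (l : Fin n → ℕ → ℂ) : chiFun z m l = gamFun z m l := by
  funext w
  simp only [chiFun, gamFun, smul_eq_mul, div_eq_inv_mul]

lemma hasDerivAt_div_sub_pow (c z₀ : ℂ) (k : ℕ) {w : ℂ} (hw : w ≠ z₀) :
    HasDerivAt (fun w => c / (w - z₀) ^ (k + 1)) (-(k + 1) * c / (w - z₀) ^ (k + 2)) w := by
  have hw' : w - z₀ ≠ 0 := sub_ne_zero.2 hw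
  have h :=
    ((((hasDerivAt_id' w).sub_const z₀).fun_pow (k + 1)).inv (pow_ne_zero _ hw')).const_mul c
  simp only [div_eq_mul_inv] at h ⊢
  refine h.congr_deriv ?_
  field_simp
  push_cast
  ring

variable {V : Type*} [NormedAddCommGroup V] [NormedSpace ℂ V] (v : Fin n → ℕ → V)

lemma continuousAt_gamFun {w : ℂ} (hw : ∀ a, w ≠ z a) : ContinuousAt (gamFun z m v) w := by
  unfold gamFun
  fun_prop (disch := exact pow_ne_zero _ (sub_ne_zero.2 (hw _)))

lemma tendsto_gamFun_cobounded : Tendsto (gamFun z m v) (cobounded ℂ) (𝓝 0) := by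
  have hterm (c : ℂ) (k : ℕ) (x : V) :
      Tendsto (fun w : ℂ => ((w - c) ^ (k + 1))⁻¹ • x) (cobounded ℂ) (𝓝 0) := by
    simpa [inv_pow] using
      ((tendsto_inv₀_cobounded.comp (tendsto_sub_const_cobounded c)).pow (k + 1)).smul_const x
  unfold gamFun
  simpa using tendsto_finsetSum _ fun a _ => tendsto_finsetSum _ fun p _ => hterm (z a) p (v a p)

-- The `p = 0` coefficient vanishes, so the truncated `p - 1` there does no harm.
noncomputable def chiDer (l : Fin n → ℕ → ℂ) : ℂ → ℂ :=
  chiFun z (fun a => m a + 1) (fun a p => -p * l a (p - 1))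

variable (l : Fin n → ℕ → ℂ) {w : ℂ}

lemma hasDerivAt_chiFun (hw : ∀ a, w ≠ z a) : HasDerivAt (chiFun z m l) (chiDer z m l w) w := by
  have hsum : chiDer z m l w =
      ∑ a, ∑ p ∈ Finset.range (m a + 1), -(p + 1 : ℂ) * l a p / (w - z a) ^ (p + 2) := by
    simp only [chiDer, chiFun]
    refine Finset.sum_congr rfl fun a _ => ?_
    rw [Finset.sum_range_succ']
    simp
  rw [hsum]
  exact HasDerivAt.fun_sum fun a _ => HasDerivAt.fun_sum fun p _ =>
    hasDerivAt_div_sub_pow _ _ _ (hw a)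

lemma deriv_chiFun_sub_const (linf : ℂ) (hw : ∀ a, w ≠ z a) :
    deriv (fun w => chiFun z m l w - linf) w = chiDer z m l w := by
  rw [deriv_sub_const, (hasDerivAt_chiFun z m l hw).deriv]

lemma continuousAt_chiFun (hw : ∀ a, w ≠ z a) : ContinuousAt (chiFun z m l) w :=
  chiFun_eq_gamFun z m l ▸ continuousAt_gamFun z m l hw

lemma tendsto_chiFun_cobounded : Tendsto (chiFun z m l) (cobounded ℂ) (𝓝 0) :=
  chiFun_eq_gamFun z m l ▸ tendsto_gamFun_cobounded z m l

lemma continuousAt_chiDer (hw : ∀ a, w ≠ z a) : ContinuousAt (chiDer z m l) w :=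
  continuousAt_chiFun _ _ _ hw

lemma tendsto_chiDer_cobounded : Tendsto (chiDer z m l) (cobounded ℂ) (𝓝 0) :=
  tendsto_chiFun_cobounded _ _ _

end PartialFractions

section ZeroCount

open Polynomial

variable {n : ℕ} (z : Fin n → ℂ) (m : Fin n → ℕ)

noncomputable def twistDenom : ℂ[X] :=
  ∏ a, (X - C (z a)) ^ (m a + 1)

noncomputable def twistNumer (l : Fin n → ℕ → ℂ) : ℂ[X] :=
  ∑ a, ∑ p ∈ Finset.range (m a + 1),
    C (l a p) * ((X - C (z a)) ^ (m a - p) * ∏ b ∈ Finset.univ.erase a, (X - C (z b)) ^ (m b + 1))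

lemma monic_twistDenom : (twistDenom z m).Monic :=
  monic_prod_of_monic _ _ fun _ _ => (monic_X_sub_C _).pow _

lemma natDegree_twistDenom : (twistDenom z m).natDegree = ∑ a, (m a + 1) := by
  rw [twistDenom, natDegree_prod_of_monic _ _ fun _ _ => (monic_X_sub_C _).pow _]
  simp

lemma degree_twistNumer_lt (l : Fin n → ℕ → ℂ) :
    (twistNumer z m l).degree < ↑(∑ a, (m a + 1)) := by
  rw [← mem_degreeLT, twistNumer]
  refine Submodule.sum_mem _ fun a _ => Submodule.sum_mem _ fun p hp => ?_
  have hdeg : ((X - C (z a)) ^ (m a - p) *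
      ∏ b ∈ Finset.univ.erase a, (X - C (z b)) ^ (m b + 1)).natDegree < ∑ a, (m a + 1) := by
    rw [((monic_X_sub_C _).pow _).natDegree_mul
      (monic_prod_of_monic _ _ fun _ _ => (monic_X_sub_C _).pow _),
      natDegree_prod_of_monic _ _ fun _ _ => (monic_X_sub_C _).pow _,
      ← Finset.add_sum_erase _ _ (Finset.mem_univ a)]
    simp only [natDegree_pow, natDegree_X_sub_C, mul_one]
    have := Finset.mem_range.1 hp
    omega
  rw [mem_degreeLT]
  exact degree_le_natDegree.trans_lt
    (WithBot.coe_lt_coe.2 ((natDegree_C_mul_le _ _).trans_lt hdeg))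

lemma eval_twistNumer (l : Fin n → ℕ → ℂ) {u : ℂ} (hu : ∀ a, u ≠ z a) :
    (twistNumer z m l).eval u = chiFun z m l u * (twistDenom z m).eval u := by
  simp only [twistNumer, twistDenom, chiFun, eval_finsetSum, eval_mul, eval_C, eval_pow,
    eval_prod, eval_sub, eval_X, Finset.sum_mul]
  refine Finset.sum_congr rfl fun a _ => Finset.sum_congr rfl fun p hp => ?_
  have hu' : u - z a ≠ 0 := sub_ne_zero.2 (hu a)
  rw [← Finset.mul_prod_erase _ _ (Finset.mem_univ a), div_mul_eq_mul_div,
    eq_div_iff (pow_ne_zero _ hu')]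
  have := Finset.mem_range.1 hp
  rw [show m a + 1 = (m a - p) + (p + 1) by omega, pow_add]
  ring

theorem chiFun_ne_of_forall_ne_zeros {l : Fin n → ℕ → ℂ} {linf : ℂ} (hlinf : linf ≠ 0)
    {ι : Type*} [Fintype ι] {ζ : ι → ℂ} (hζ : Function.Injective ζ)
    (hcard : ∑ a, (m a + 1) ≤ Fintype.card ι) (hζpole : ∀ i a, ζ i ≠ z a)
    (hζzero : ∀ i, chiFun z m l (ζ i) = linf) {w : ℂ} (hw : ∀ a, w ≠ z a) (hwζ : ∀ i, w ≠ ζ i) :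
    chiFun z m l w ≠ linf := by
  intro hwzero
  set P := C linf * twistDenom z m - twistNumer z m l
  have hdeg : P.degree = ↑(∑ a, (m a + 1)) := by
    have hdenom : (C linf * twistDenom z m).degree = ↑(∑ a, (m a + 1)) := by
      rw [degree_C_mul hlinf, degree_eq_natDegree (monic_twistDenom z m).ne_zero,
        natDegree_twistDenom]
    rw [degree_sub_eq_left_of_degree_lt (hdenom ▸ degree_twistNumer_lt z m l), hdenom]
  have hroot : ∀ u, (∀ a, u ≠ z a) → chiFun z m l u = linf → P.eval u = 0 := by
    intro u hu hu'
    simp [P, eval_twistNumer z m l hu, hu']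
  have hinj : Function.Injective fun o : Option ι => o.elim w ζ := by
    rintro (_ | i) (_ | j) h
    · rfl
    · exact absurd h (hwζ j)
    · exact absurd h.symm (hwζ i)
    · exact congrArg some (hζ h)
  have hP : P = 0 := by
    refine eq_zero_of_natDegree_lt_card_of_eval_eq_zero P hinj ?_ ?_
    · rintro (_ | i)
      exacts [hroot w hw hwzero, hroot _ (hζpole i) (hζzero i)]
    · rw [natDegree_eq_of_degree_eq_some hdeg, Fintype.card_option]
      omega
  rw [hP, degree_zero] at hdeg
  exact WithBot.bot_ne_coe hdeg

end ZeroCount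

section Cobounded

variable {ι : Type*} {L : Filter ι}

lemma Filter.Tendsto.add_cobounded {E : Type*} [NormedAddCommGroup E] {f g : ι → E} {b : E}
    (hg : Tendsto g L (𝓝 b)) (hf : Tendsto f L (cobounded E)) :
    Tendsto (fun t => g t + f t) L (cobounded E) := by
  rw [← tendsto_norm_atTop_iff_cobounded] at hf ⊢
  have hgb : ∀ᶠ t in L, -(‖b‖ + 1) ≤ -‖g t‖ :=
    (hg.norm.eventually_lt_const (lt_add_one ‖b‖)).mono fun t ht => neg_le_neg ht.le
  refine tendsto_atTop_mono (fun t => ?_) (tendsto_atTop_add_left_of_le' L _ hgb hf)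
  have := norm_le_norm_add_norm_sub' (f t) (g t + f t)
  simp only [sub_add_cancel_right, norm_neg] at this
  linarith

lemma Filter.Tendsto.sub_cobounded {E : Type*} [NormedAddCommGroup E] {f g : ι → E} {b : E}
    (hg : Tendsto g L (𝓝 b)) (hf : Tendsto f L (cobounded E)) :
    Tendsto (fun t => g t - f t) L (cobounded E) := by
  simpa only [sub_eq_add_neg, Function.comp_def] using
    hg.add_cobounded (tendsto_neg_cobounded.comp hf)

section
variable {X Y : Type*} [TopologicalSpace X] [Bornology X] [TopologicalSpace Y] [AddMonoid Y]
  [ContinuousAdd Y] {f₁ f₂ : X → Y} {u₁ u₂ : ι → X} {x : X}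

lemma tendsto_comp_add_comp_of_vanishing_right (hf₁ : ContinuousAt f₁ x)
    (hf₂ : Tendsto f₂ (cobounded X) (𝓝 0)) (hu₁ : Tendsto u₁ L (𝓝 x))
    (hu₂ : Tendsto u₂ L (cobounded X)) :
    Tendsto (fun t => f₁ (u₁ t) + f₂ (u₂ t)) L (𝓝 (f₁ x)) := by
  simpa using (hf₁.tendsto.comp hu₁).add (hf₂.comp hu₂)

lemma tendsto_comp_add_comp_of_vanishing_left (hf₁ : Tendsto f₁ (cobounded X) (𝓝 0))
    (hf₂ : ContinuousAt f₂ x) (hu₁ : Tendsto u₁ L (cobounded X)) (hu₂ : Tendsto u₂ L (𝓝 x)) :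
    Tendsto (fun t => f₁ (u₁ t) + f₂ (u₂ t)) L (𝓝 (f₂ x)) := by
  simpa using (hf₁.comp hu₁).add (hf₂.tendsto.comp hu₂)

end

lemma tendsto_ofReal_inv_nhdsNE_zero :
    Tendsto (fun γ : ℝ => (γ : ℂ)⁻¹) (𝓝[≠] 0) (cobounded ℂ) := by
  rw [← tendsto_norm_atTop_iff_cobounded]
  simpa [Function.comp_def] using
    tendsto_norm_cobounded_atTop.comp (tendsto_inv₀_nhdsNE_zero (α := ℝ))

lemma tendsto_nhdsNE_zero_of_norm_sub_le {E : Type*} [SeminormedAddCommGroup E] {f : ℝ → E} {a : E}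
    (C : ℝ) (h : ∀ᶠ γ in 𝓝[≠] 0, ‖f γ - a‖ ≤ C * |γ|) : Tendsto f (𝓝[≠] 0) (𝓝 a) := by
  have hC : Tendsto (fun γ : ℝ => C * |γ|) (𝓝[≠] 0) (𝓝 0) := by
    simpa using ((continuous_abs.tendsto (0 : ℝ)).mono_left nhdsWithin_le_nhds).const_mul C
  exact tendsto_iff_norm_sub_tendsto_zero.2 (squeeze_zero' (.of_forall fun _ => norm_nonneg _) h hC)

end Cobounded

section LaxPair

variable {n₁ n₂ : ℕ} {V : Type*} [NormedAddCommGroup V] [NormedSpace ℂ V]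
  {z1 : Fin n₁ → ℂ} {m1 : Fin n₁ → ℕ} {l1 : Fin n₁ → ℕ → ℂ} {v1 : Fin n₁ → ℕ → V}
  {z2 : Fin n₂ → ℂ} {m2 : Fin n₂ → ℕ} {l2 : Fin n₂ → ℕ → ℂ} {v2 : Fin n₂ → ℕ → V}
  {linf : ℂ} {ι : Type*} {L : Filter ι}

lemma deriv_chiFun_add_chiFun_sub {c w : ℂ} (hw₁ : ∀ a, w ≠ z1 a) (hw₂ : ∀ a, w - c ≠ z2 a) :
    deriv (fun w => chiFun z1 m1 l1 w + chiFun z2 m2 l2 (w - c) - linf) w =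
      chiDer z1 m1 l1 w + chiDer z2 m2 l2 (w - c) := by
  have h₂ := (hasDerivAt_chiFun z2 m2 l2 hw₂).comp w ((hasDerivAt_id' w).sub_const c)
  rw [mul_one] at h₂
  exact (((hasDerivAt_chiFun z1 m1 l1 hw₁).add h₂).sub_const linf).deriv

lemma tendsto_laxL_left {u₁ u₂ : ι → ℂ} {x : ℂ} (hu₁ : Tendsto u₁ L (𝓝 x)) (hx : ∀ a, x ≠ z1 a)
    (hφ : chiFun z1 m1 l1 x - linf ≠ 0) (hu₂ : Tendsto u₂ L (cobounded ℂ)) :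
    Tendsto (fun t => (chiFun z1 m1 l1 (u₁ t) + chiFun z2 m2 l2 (u₂ t) - linf)⁻¹ •
        (gamFun z1 m1 v1 (u₁ t) + gamFun z2 m2 v2 (u₂ t)))
      L (𝓝 ((chiFun z1 m1 l1 x - linf)⁻¹ • gamFun z1 m1 v1 x)) :=
  (((tendsto_comp_add_comp_of_vanishing_right (continuousAt_chiFun z1 m1 l1 hx)
    (tendsto_chiFun_cobounded z2 m2 l2) hu₁ hu₂).sub_const linf).inv₀ hφ).smul
    (tendsto_comp_add_comp_of_vanishing_right (continuousAt_gamFun z1 m1 v1 hx)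
      (tendsto_gamFun_cobounded z2 m2 v2) hu₁ hu₂)

lemma tendsto_laxL_right {u₁ u₂ : ι → ℂ} {x : ℂ} (hu₁ : Tendsto u₁ L (cobounded ℂ))
    (hu₂ : Tendsto u₂ L (𝓝 x)) (hx : ∀ a, x ≠ z2 a) (hφ : chiFun z2 m2 l2 x - linf ≠ 0) :
    Tendsto (fun t => (chiFun z1 m1 l1 (u₁ t) + chiFun z2 m2 l2 (u₂ t) - linf)⁻¹ •
        (gamFun z1 m1 v1 (u₁ t) + gamFun z2 m2 v2 (u₂ t)))
      L (𝓝 ((chiFun z2 m2 l2 x - linf)⁻¹ • gamFun z2 m2 v2 x)) :=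
  (((tendsto_comp_add_comp_of_vanishing_left (tendsto_chiFun_cobounded z1 m1 l1)
    (continuousAt_chiFun z2 m2 l2 hx) hu₁ hu₂).sub_const linf).inv₀ hφ).smul
    (tendsto_comp_add_comp_of_vanishing_left (tendsto_gamFun_cobounded z1 m1 v1)
      (continuousAt_gamFun z2 m2 v2 hx) hu₁ hu₂)

variable {c u r : ι → ℂ} {x y e : ℂ}

lemma tendsto_laxM_term_left (hu : Tendsto u L (𝓝 x)) (hx : ∀ a, x ≠ z1 a)
    (huc : Tendsto (fun t => u t - c t) L (cobounded ℂ))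
    (hd : deriv (fun w => chiFun z1 m1 l1 w - linf) x ≠ 0) (hr : Tendsto r L (𝓝 y)) :
    Tendsto (fun t =>
        ((e / deriv (fun w => chiFun z1 m1 l1 w + chiFun z2 m2 l2 (w - c t) - linf) (u t)) * r t) •
          (gamFun z1 m1 v1 (u t) + gamFun z2 m2 v2 (u t - c t)))
      L (𝓝 (((e / deriv (fun w => chiFun z1 m1 l1 w - linf) x) * y) • gamFun z1 m1 v1 x)) := by
  rw [deriv_chiFun_sub_const z1 m1 l1 linf hx] at hd ⊢
  have hD := tendsto_comp_add_comp_of_vanishing_right (continuousAt_chiDer z1 m1 l1 hx)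
    (tendsto_chiDer_cobounded z2 m2 l2) hu huc
  refine (((tendsto_const_nhds.div (hD.congr' ?_) hd).mul hr).smul
    (tendsto_comp_add_comp_of_vanishing_right (continuousAt_gamFun z1 m1 v1 hx)
      (tendsto_gamFun_cobounded z2 m2 v2) hu huc))
  filter_upwards [eventually_all.2 fun a => hu.eventually_ne (hx a),
    eventually_all.2 fun a => huc.eventually_ne_cobounded (z2 a)] with t h₁ h₂
  exact (deriv_chiFun_add_chiFun_sub h₁ h₂).symm

lemma tendsto_laxM_term_right (hu : Tendsto u L (cobounded ℂ))
    (huc : Tendsto (fun t => u t - c t) L (𝓝 x)) (hx : ∀ a, x ≠ z2 a)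
    (hd : deriv (fun w => chiFun z2 m2 l2 w - linf) x ≠ 0) (hr : Tendsto r L (𝓝 y)) :
    Tendsto (fun t =>
        ((e / deriv (fun w => chiFun z1 m1 l1 w + chiFun z2 m2 l2 (w - c t) - linf) (u t)) * r t) •
          (gamFun z1 m1 v1 (u t) + gamFun z2 m2 v2 (u t - c t)))
      L (𝓝 (((e / deriv (fun w => chiFun z2 m2 l2 w - linf) x) * y) • gamFun z2 m2 v2 x)) := by
  rw [deriv_chiFun_sub_const z2 m2 l2 linf hx] at hd ⊢
  have hD := tendsto_comp_add_comp_of_vanishing_left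
    (tendsto_chiDer_cobounded z1 m1 l1) (continuousAt_chiDer z2 m2 l2 hx) hu huc
  refine (((tendsto_const_nhds.div (hD.congr' ?_) hd).mul hr).smul
    (tendsto_comp_add_comp_of_vanishing_left (tendsto_gamFun_cobounded z1 m1 v1)
      (continuousAt_gamFun z2 m2 v2 hx) hu huc))
  filter_upwards [eventually_all.2 fun a => hu.eventually_ne_cobounded (z1 a),
    eventually_all.2 fun a => huc.eventually_ne (hx a)] with t h₁ h₂
  exact (deriv_chiFun_add_chiFun_sub h₁ h₂).symm

variable {κ₁ κ₂ : Type*} [Fintype κ₁] [Fintype κ₂] {ζ : κ₁ ⊕ κ₂ → ι → ℂ} {ζ1 : κ₁ → ℂ}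
  {ζ2 : κ₂ → ℂ} (eps : κ₁ ⊕ κ₂ → ℂ) {z : ℂ}

theorem tendsto_laxM_left (hc : Tendsto c L (cobounded ℂ))
    (hζ1 : ∀ i, Tendsto (ζ (.inl i)) L (𝓝 (ζ1 i)))
    (hζ2 : ∀ j, Tendsto (fun t => ζ (.inr j) t - c t) L (𝓝 (ζ2 j)))
    (hζ1p : ∀ i a, ζ1 i ≠ z1 a) (hζ2p : ∀ j a, ζ2 j ≠ z2 a)
    (hζ1s : ∀ i, deriv (fun w => chiFun z1 m1 l1 w - linf) (ζ1 i) ≠ 0)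
    (hζ2s : ∀ j, deriv (fun w => chiFun z2 m2 l2 w - linf) (ζ2 j) ≠ 0) (hz : ∀ i, z ≠ ζ1 i) :
    Tendsto (fun t => ∑ i, ((eps i /
        deriv (fun w => chiFun z1 m1 l1 w + chiFun z2 m2 l2 (w - c t) - linf) (ζ i t)) *
          (z - ζ i t)⁻¹) • (gamFun z1 m1 v1 (ζ i t) + gamFun z2 m2 v2 (ζ i t - c t)))
      L (𝓝 (∑ i, ((eps (.inl i) / deriv (fun w => chiFun z1 m1 l1 w - linf) (ζ1 i)) *
          (z - ζ1 i)⁻¹) • gamFun z1 m1 v1 (ζ1 i))) := by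
  simp only [Fintype.sum_sum_type]
  rw [← add_zero (∑ i, _), ← Finset.sum_const_zero (s := (Finset.univ : Finset κ₂))]
  refine (tendsto_finsetSum _ fun i _ => ?_).add (tendsto_finsetSum _ fun j _ => ?_)
  · exact tendsto_laxM_term_left (hζ1 i) (hζ1p i) ((hζ1 i).sub_cobounded hc) (hζ1s i)
      ((tendsto_const_nhds.sub (hζ1 i)).inv₀ (sub_ne_zero.2 (hz i)))
  · have hfar : Tendsto (fun t => z - ζ (.inr j) t) L (cobounded ℂ) :=
      ((tendsto_const_nhds.sub (hζ2 j)).sub_cobounded hc).congr fun t => by ring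
    simpa using tendsto_laxM_term_right (e := eps (.inr j)) (v1 := v1) (v2 := v2)
      (((hζ2 j).add_cobounded hc).congr fun t => by ring) (hζ2 j) (hζ2p j) (hζ2s j)
      (tendsto_inv₀_cobounded.comp hfar)

theorem tendsto_laxM_right (hc : Tendsto c L (cobounded ℂ))
    (hζ1 : ∀ i, Tendsto (ζ (.inl i)) L (𝓝 (ζ1 i)))
    (hζ2 : ∀ j, Tendsto (fun t => ζ (.inr j) t - c t) L (𝓝 (ζ2 j)))
    (hζ1p : ∀ i a, ζ1 i ≠ z1 a) (hζ2p : ∀ j a, ζ2 j ≠ z2 a)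
    (hζ1s : ∀ i, deriv (fun w => chiFun z1 m1 l1 w - linf) (ζ1 i) ≠ 0)
    (hζ2s : ∀ j, deriv (fun w => chiFun z2 m2 l2 w - linf) (ζ2 j) ≠ 0) (hz : ∀ j, z ≠ ζ2 j) :
    Tendsto (fun t => ∑ i, ((eps i /
        deriv (fun w => chiFun z1 m1 l1 w + chiFun z2 m2 l2 (w - c t) - linf) (ζ i t)) *
          (z + c t - ζ i t)⁻¹) • (gamFun z1 m1 v1 (ζ i t) + gamFun z2 m2 v2 (ζ i t - c t)))
      L (𝓝 (∑ j, ((eps (.inr j) / deriv (fun w => chiFun z2 m2 l2 w - linf) (ζ2 j)) *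
          (z - ζ2 j)⁻¹) • gamFun z2 m2 v2 (ζ2 j))) := by
  simp only [Fintype.sum_sum_type]
  rw [← zero_add (∑ j, _), ← Finset.sum_const_zero (s := (Finset.univ : Finset κ₁))]
  refine (tendsto_finsetSum _ fun i _ => ?_).add (tendsto_finsetSum _ fun j _ => ?_)
  · have hfar : Tendsto (fun t => z + c t - ζ (.inl i) t) L (cobounded ℂ) :=
      ((tendsto_const_nhds.sub (hζ1 i)).add_cobounded hc).congr fun t => by ring
    simpa using tendsto_laxM_term_left (e := eps (.inl i)) (v1 := v1) (v2 := v2)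
      (hζ1 i) (hζ1p i) ((hζ1 i).sub_cobounded hc) (hζ1s i) (tendsto_inv₀_cobounded.comp hfar)
  · have hnear : Tendsto (fun t => z + c t - ζ (.inr j) t) L (𝓝 (z - ζ2 j)) :=
      (tendsto_const_nhds.sub (hζ2 j)).congr fun t => by ring
    exact tendsto_laxM_term_right (((hζ2 j).add_cobounded hc).congr fun t => by ring) (hζ2 j)
      (hζ2p j) (hζ2s j) (hnear.inv₀ (sub_ne_zero.2 (hz j)))

end LaxPair

theorem decoupling_of_Lax_pair_general
    {n₁ n₂ M₁ M₂ : ℕ} {V : Type*} [NormedAddCommGroup V] [NormedSpace ℂ V]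
    (z1 : Fin n₁ → ℂ) (m1 : Fin n₁ → ℕ) (l1 : Fin n₁ → ℕ → ℂ)
    (z2 : Fin n₂ → ℂ) (m2 : Fin n₂ → ℕ) (l2 : Fin n₂ → ℕ → ℂ)
    (linf : ℂ) (hlinf : linf ≠ 0)
    (hM1 : M₁ = ∑ a, (m1 a + 1)) (hM2 : M₂ = ∑ a, (m2 a + 1))
    (ζ1 : Fin M₁ → ℂ) (ζ2 : Fin M₂ → ℂ)
    (hζ1inj : Function.Injective ζ1) (hζ2inj : Function.Injective ζ2)
    (hζ1p : ∀ i a, ζ1 i ≠ z1 a) (hζ2p : ∀ j a, ζ2 j ≠ z2 a)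
    (hζ1z : ∀ i, chiFun z1 m1 l1 (ζ1 i) - linf = 0)
    (hζ2z : ∀ j, chiFun z2 m2 l2 (ζ2 j) - linf = 0)
    (hζ1s : ∀ i, deriv (fun w => chiFun z1 m1 l1 w - linf) (ζ1 i) ≠ 0)
    (hζ2s : ∀ j, deriv (fun w => chiFun z2 m2 l2 w - linf) (ζ2 j) ≠ 0)
    (v1 : Fin n₁ → ℕ → V) (v2 : Fin n₂ → ℕ → V)
    (eps : Fin M₁ ⊕ Fin M₂ → ℂ)
    -- the zeros `ζ i γ` of the coupled twist function provided by the decoupling lemma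
    (ε C : ℝ) (hε : 0 < ε)
    (ζ : Fin M₁ ⊕ Fin M₂ → ℝ → ℂ)
    (hζ : ∀ γ : ℝ, 0 < |γ| → |γ| < ε →
      (Function.Injective fun i => ζ i γ) ∧
      (∀ i, chiFun z1 m1 l1 (ζ i γ) + chiFun z2 m2 l2 (ζ i γ - (γ : ℂ)⁻¹) - linf = 0 ∧
        deriv (fun w => chiFun z1 m1 l1 w + chiFun z2 m2 l2 (w - (γ : ℂ)⁻¹) - linf)
          (ζ i γ) ≠ 0) ∧
      (∀ i : Fin M₁, ‖ζ (Sum.inl i) γ - ζ1 i‖ ≤ C * |γ|) ∧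
      (∀ j : Fin M₂, ‖ζ (Sum.inr j) γ - (γ : ℂ)⁻¹ - ζ2 j‖ ≤ C * |γ|)) :
    -- first decoupling limit: `(ℒ_γ(z), ℳ_γ(z)) → (ℒ⁽¹⁾(z), ℳ⁽¹⁾(z))`
    (∀ z : ℂ, (∀ a, z ≠ z1 a) → (∀ i, z ≠ ζ1 i) →
      Tendsto
        (fun γ : ℝ =>
          (chiFun z1 m1 l1 z + chiFun z2 m2 l2 (z - (γ : ℂ)⁻¹) - linf)⁻¹ •
            (gamFun z1 m1 v1 z + gamFun z2 m2 v2 (z - (γ : ℂ)⁻¹)))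
        (𝓝[≠] (0 : ℝ))
        (𝓝 ((chiFun z1 m1 l1 z - linf)⁻¹ • gamFun z1 m1 v1 z)) ∧
      Tendsto
        (fun γ : ℝ =>
          ∑ i : Fin M₁ ⊕ Fin M₂,
            ((eps i / deriv
                (fun w => chiFun z1 m1 l1 w + chiFun z2 m2 l2 (w - (γ : ℂ)⁻¹) - linf)
                (ζ i γ)) * (z - ζ i γ)⁻¹) •
              (gamFun z1 m1 v1 (ζ i γ) + gamFun z2 m2 v2 (ζ i γ - (γ : ℂ)⁻¹)))
        (𝓝[≠] (0 : ℝ))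
        (𝓝 (∑ i : Fin M₁,
          ((eps (Sum.inl i) / deriv (fun w => chiFun z1 m1 l1 w - linf) (ζ1 i)) *
            (z - ζ1 i)⁻¹) • gamFun z1 m1 v1 (ζ1 i)))) ∧
    -- second decoupling limit: `(ℒ_γ(z + γ⁻¹), ℳ_γ(z + γ⁻¹)) → (ℒ⁽²⁾(z), ℳ⁽²⁾(z))`
    (∀ z : ℂ, (∀ a, z ≠ z2 a) → (∀ j, z ≠ ζ2 j) →
      Tendsto
        (fun γ : ℝ =>
          (chiFun z1 m1 l1 (z + (γ : ℂ)⁻¹)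
              + chiFun z2 m2 l2 (z + (γ : ℂ)⁻¹ - (γ : ℂ)⁻¹) - linf)⁻¹ •
            (gamFun z1 m1 v1 (z + (γ : ℂ)⁻¹)
              + gamFun z2 m2 v2 (z + (γ : ℂ)⁻¹ - (γ : ℂ)⁻¹)))
        (𝓝[≠] (0 : ℝ))
        (𝓝 ((chiFun z2 m2 l2 z - linf)⁻¹ • gamFun z2 m2 v2 z)) ∧
      Tendsto
        (fun γ : ℝ =>
          ∑ i : Fin M₁ ⊕ Fin M₂,
            ((eps i / deriv
                (fun w => chiFun z1 m1 l1 w + chiFun z2 m2 l2 (w - (γ : ℂ)⁻¹) - linf)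
                (ζ i γ)) * (z + (γ : ℂ)⁻¹ - ζ i γ)⁻¹) •
              (gamFun z1 m1 v1 (ζ i γ) + gamFun z2 m2 v2 (ζ i γ - (γ : ℂ)⁻¹)))
        (𝓝[≠] (0 : ℝ))
        (𝓝 (∑ j : Fin M₂,
          ((eps (Sum.inr j) / deriv (fun w => chiFun z2 m2 l2 w - linf) (ζ2 j)) *
            (z - ζ2 j)⁻¹) • gamFun z2 m2 v2 (ζ2 j)))) := by
  have hc : Tendsto (fun γ : ℝ => (γ : ℂ)⁻¹) (𝓝[≠] 0) (cobounded ℂ) :=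
    tendsto_ofReal_inv_nhdsNE_zero
  have hsmall : ∀ᶠ γ : ℝ in 𝓝[≠] 0, 0 < |γ| ∧ |γ| < ε := by
    filter_upwards [self_mem_nhdsWithin, nhdsWithin_le_nhds (Metric.ball_mem_nhds 0 hε)]
      with γ hγ₀ hγε
    exact ⟨abs_pos.2 hγ₀, by simpa using hγε⟩
  have hζ1 : ∀ i, Tendsto (ζ (.inl i)) (𝓝[≠] 0) (𝓝 (ζ1 i)) := fun i =>
    tendsto_nhdsNE_zero_of_norm_sub_le C (hsmall.mono fun γ h => (hζ γ h.1 h.2).2.2.1 i)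
  have hζ2 : ∀ j, Tendsto (fun γ : ℝ => ζ (.inr j) γ - (γ : ℂ)⁻¹) (𝓝[≠] 0) (𝓝 (ζ2 j)) :=
    fun j => tendsto_nhdsNE_zero_of_norm_sub_le C (hsmall.mono fun γ h => (hζ γ h.1 h.2).2.2.2 j)
  refine ⟨fun z hz hzζ => ⟨?_, ?_⟩, fun z hz hzζ => ⟨?_, ?_⟩⟩
  · refine tendsto_laxL_left tendsto_const_nhds hz (sub_ne_zero.2 ?_)
      (tendsto_const_nhds.sub_cobounded hc)
    exact chiFun_ne_of_forall_ne_zeros z1 m1 hlinf hζ1inj (by rw [Fintype.card_fin, hM1]) hζ1p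
      (fun i => sub_eq_zero.1 (hζ1z i)) hz hzζ
  · exact tendsto_laxM_left eps hc hζ1 hζ2 hζ1p hζ2p hζ1s hζ2s hzζ
  · simp only [add_sub_cancel_right]
    refine tendsto_laxL_right (tendsto_const_nhds.add_cobounded hc) tendsto_const_nhds hz
      (sub_ne_zero.2 ?_)
    exact chiFun_ne_of_forall_ne_zeros z2 m2 hlinf hζ2inj (by rw [Fintype.card_fin, hM2]) hζ2p
      (fun j => sub_eq_zero.1 (hζ2z j)) hz hzζ
  · exact tendsto_laxM_right eps hc hζ1 hζ2 hζ1p hζ2p hζ1s hζ2s hzζ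

/-- **Decoupling of the Lax pair** (Proposition 2.2, rational-function version).
With `ℒ_γ(z) = Γ_γ(z)/φ_γ(z)` and
`ℳ_γ(z) = Σ_i (ε_i/φ_γ'(ζ_i(γ))) Γ_γ(ζ_i(γ))/(z - ζ_i(γ))`, one has
`(ℒ_γ(z), ℳ_γ(z)) → (ℒ⁽¹⁾(z), ℳ⁽¹⁾(z))` and
`(ℒ_γ(z + γ⁻¹), ℳ_γ(z + γ⁻¹)) → (ℒ⁽²⁾(z), ℳ⁽²⁾(z))` as γ → 0, for every `z` avoiding the
poles of the limit functions. -/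
theorem decoupling_of_Lax_pair
    {n₁ n₂ M₁ M₂ : ℕ} {V : Type*} [NormedAddCommGroup V] [NormedSpace ℂ V]
    (z1 : Fin n₁ → ℂ) (m1 : Fin n₁ → ℕ) (l1 : Fin n₁ → ℕ → ℂ)
    (z2 : Fin n₂ → ℂ) (m2 : Fin n₂ → ℕ) (l2 : Fin n₂ → ℕ → ℂ)
    (linf : ℂ) (hlinf : linf ≠ 0)
    (hz1 : Function.Injective z1) (hz2 : Function.Injective z2)
    (hl1 : ∀ a, l1 a (m1 a) ≠ 0) (hl2 : ∀ a, l2 a (m2 a) ≠ 0)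
    (hM1 : M₁ = ∑ a, (m1 a + 1)) (hM2 : M₂ = ∑ a, (m2 a + 1))
    (ζ1 : Fin M₁ → ℂ) (ζ2 : Fin M₂ → ℂ)
    (hζ1inj : Function.Injective ζ1) (hζ2inj : Function.Injective ζ2)
    (hζ1p : ∀ i a, ζ1 i ≠ z1 a) (hζ2p : ∀ j a, ζ2 j ≠ z2 a)
    (hζ1z : ∀ i, chiFun z1 m1 l1 (ζ1 i) - linf = 0)
    (hζ2z : ∀ j, chiFun z2 m2 l2 (ζ2 j) - linf = 0)
    (hζ1s : ∀ i, deriv (fun w => chiFun z1 m1 l1 w - linf) (ζ1 i) ≠ 0)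
    (hζ2s : ∀ j, deriv (fun w => chiFun z2 m2 l2 w - linf) (ζ2 j) ≠ 0)
    (v1 : Fin n₁ → ℕ → V) (v2 : Fin n₂ → ℕ → V)
    (eps : Fin M₁ ⊕ Fin M₂ → ℂ)
    -- the zeros `ζ i γ` of the coupled twist function provided by the decoupling lemma
    (ε C : ℝ) (hε : 0 < ε) (hC : 0 < C)
    (ζ : Fin M₁ ⊕ Fin M₂ → ℝ → ℂ)
    (hζ : ∀ γ : ℝ, 0 < |γ| → |γ| < ε →
      (Function.Injective fun i => ζ i γ) ∧
      (∀ i, chiFun z1 m1 l1 (ζ i γ) + chiFun z2 m2 l2 (ζ i γ - (γ : ℂ)⁻¹) - linf = 0 ∧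
        deriv (fun w => chiFun z1 m1 l1 w + chiFun z2 m2 l2 (w - (γ : ℂ)⁻¹) - linf)
          (ζ i γ) ≠ 0) ∧
      (∀ i : Fin M₁, ‖ζ (Sum.inl i) γ - ζ1 i‖ ≤ C * |γ|) ∧
      (∀ j : Fin M₂, ‖ζ (Sum.inr j) γ - (γ : ℂ)⁻¹ - ζ2 j‖ ≤ C * |γ|)) :
    -- first decoupling limit: `(ℒ_γ(z), ℳ_γ(z)) → (ℒ⁽¹⁾(z), ℳ⁽¹⁾(z))`
    (∀ z : ℂ, (∀ a, z ≠ z1 a) → (∀ i, z ≠ ζ1 i) →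
      Tendsto
        (fun γ : ℝ =>
          (chiFun z1 m1 l1 z + chiFun z2 m2 l2 (z - (γ : ℂ)⁻¹) - linf)⁻¹ •
            (gamFun z1 m1 v1 z + gamFun z2 m2 v2 (z - (γ : ℂ)⁻¹)))
        (𝓝[≠] (0 : ℝ))
        (𝓝 ((chiFun z1 m1 l1 z - linf)⁻¹ • gamFun z1 m1 v1 z)) ∧
      Tendsto
        (fun γ : ℝ =>
          ∑ i : Fin M₁ ⊕ Fin M₂,
            ((eps i / deriv
                (fun w => chiFun z1 m1 l1 w + chiFun z2 m2 l2 (w - (γ : ℂ)⁻¹) - linf)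
                (ζ i γ)) * (z - ζ i γ)⁻¹) •
              (gamFun z1 m1 v1 (ζ i γ) + gamFun z2 m2 v2 (ζ i γ - (γ : ℂ)⁻¹)))
        (𝓝[≠] (0 : ℝ))
        (𝓝 (∑ i : Fin M₁,
          ((eps (Sum.inl i) / deriv (fun w => chiFun z1 m1 l1 w - linf) (ζ1 i)) *
            (z - ζ1 i)⁻¹) • gamFun z1 m1 v1 (ζ1 i)))) ∧
    -- second decoupling limit: `(ℒ_γ(z + γ⁻¹), ℳ_γ(z + γ⁻¹)) → (ℒ⁽²⁾(z), ℳ⁽²⁾(z))`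
    (∀ z : ℂ, (∀ a, z ≠ z2 a) → (∀ j, z ≠ ζ2 j) →
      Tendsto
        (fun γ : ℝ =>
          (chiFun z1 m1 l1 (z + (γ : ℂ)⁻¹)
              + chiFun z2 m2 l2 (z + (γ : ℂ)⁻¹ - (γ : ℂ)⁻¹) - linf)⁻¹ •
            (gamFun z1 m1 v1 (z + (γ : ℂ)⁻¹)
              + gamFun z2 m2 v2 (z + (γ : ℂ)⁻¹ - (γ : ℂ)⁻¹)))
        (𝓝[≠] (0 : ℝ))
        (𝓝 ((chiFun z2 m2 l2 z - linf)⁻¹ • gamFun z2 m2 v2 z)) ∧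
      Tendsto
        (fun γ : ℝ =>
          ∑ i : Fin M₁ ⊕ Fin M₂,
            ((eps i / deriv
                (fun w => chiFun z1 m1 l1 w + chiFun z2 m2 l2 (w - (γ : ℂ)⁻¹) - linf)
                (ζ i γ)) * (z + (γ : ℂ)⁻¹ - ζ i γ)⁻¹) •
              (gamFun z1 m1 v1 (ζ i γ) + gamFun z2 m2 v2 (ζ i γ - (γ : ℂ)⁻¹)))
        (𝓝[≠] (0 : ℝ))
        (𝓝 (∑ j : Fin M₂,
          ((eps (Sum.inr j) / deriv (fun w => chiFun z2 m2 l2 w - linf) (ζ2 j)) *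
            (z - ζ2 j)⁻¹) • gamFun z2 m2 v2 (ζ2 j)))) :=
  decoupling_of_Lax_pair_general z1 m1 l1 z2 m2 l2 linf hlinf hM1 hM2 ζ1 ζ2 hζ1inj hζ2inj hζ1p hζ2p
    hζ1z hζ2z hζ1s hζ2s v1 v2 eps ε C hε ζ hζ
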